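/- For every μ ∈ P(𝕋^d) and every bounded measurable f : 𝕋^d → ℝ, one has μ Q_μ f = μK[f(1−p)] / μK[1−p]; in particular the map μ ↦ μQ_μ is the one-step evolution of the Euler chain conditioned on survival. -/

import Mathlib

open MeasureTheory ProbabilityTheory Real Filter
open scoped ENNReal NNReal BigOperators

noncomputable section

/-- The flat `d`-dimensional torus. -/
abbrev Torus (d : ℕ) : Type := Fin d → AddCircle (1 : ℝ)

/-- Canonical projection from `ℝ^d` to the torus. -/
def Torus.proj {d : ℕ} (v : Fin d → ℝ) : Torus d := fun i => (v i : AddCircle (1 : ℝ))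

/-- The geodesic (Euclidean) distance on the torus. -/
def tdist {d : ℕ} (x y : Torus d) : ℝ := Real.sqrt (∑ i, (dist (x i) (y i)) ^ 2)

/-- The corresponding `ℓ²` distance on `(𝕋^d)^N`. -/
def tdistN {d N : ℕ} (x y : Fin N → Torus d) : ℝ := Real.sqrt (∑ i, (tdist (x i) (y i)) ^ 2)

/-- `b` is a `C¹` vector field on the torus: its periodic lift is `C¹`. -/
def IsC1Drift {d : ℕ} (b : Torus d → Fin d → ℝ) : Prop :=
  ContDiff ℝ 1 (fun v : Fin d → ℝ => b (Torus.proj v))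

/-- `λ` is Lipschitz with constant `L` for the geodesic distance. -/
def LipDrift {d : ℕ} (L : ℝ) (lam : Torus d → ℝ) : Prop :=
  ∀ x y, |lam x - lam y| ≤ L * tdist x y

/-- The standard Gaussian distribution `N(0, I_d)` on `ℝ^d`. -/
def stdGaussian (d : ℕ) : Measure (Fin d → ℝ) := Measure.pi fun _ => gaussianReal 0 1

/-- The exponential distribution `E(1)` on `ℝ`. -/
def expLaw : Measure ℝ := volume.withDensity (exponentialPDF 1)

/-- The uniform distribution on `[0,1]`. -/
def unifLaw : Measure ℝ := volume.restrict (Set.Icc (0 : ℝ) 1)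

/-- The Euler–Maruyama transition kernel `K`:
`K(x,·)` is the law of `x + γ b(x) + √γ G` modulo `ℤ^d`, `G ~ N(0, I_d)`. -/
def eulerK {d : ℕ} (b : Torus d → Fin d → ℝ) (γ : ℝ) (x : Torus d) : Measure (Torus d) :=
  (stdGaussian d).map (fun g => x + Torus.proj (fun i => γ * b x i + Real.sqrt γ * g i))

/-- The killing probability at `z`: `p(z) = 1 - exp(-γ λ(z))`. -/
def pkill {d : ℕ} (lam : Torus d → ℝ) (γ : ℝ) (z : Torus d) : ℝ :=
  1 - Real.exp (-(γ * lam z))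

/-- The rebirth kernel `Q_μ`: `Q_μ(x,·)` is the law of `X_H` where `X₀ ~ K(x,·)`,
`X_k ~ μK` for `k ≥ 1`, `U_k ~ U([0,1])` all independent and
`H = inf {k | U_k ≥ p(X_k)}`.  It is given by the explicit formula
`Q_μ f (x) = K[f(1-p)](x) + ∑_{k ≥ 1} μK[f(1-p)] (μK p)^(k-1) K p(x)`. -/
def Qker {d : ℕ} (b : Torus d → Fin d → ℝ) (lam : Torus d → ℝ) (γ : ℝ)
    (μ : Measure (Torus d)) (x : Torus d) : Measure (Torus d) :=
  (eulerK b γ x).withDensity (fun z => ENNReal.ofReal (1 - pkill lam γ z))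
    + ((∫⁻ z, ENNReal.ofReal (pkill lam γ z) ∂(eulerK b γ x))
        * ∑' k : ℕ, (∫⁻ z, ENNReal.ofReal (pkill lam γ z) ∂(μ.bind (eulerK b γ))) ^ k)
      • ((μ.bind (eulerK b γ)).withDensity (fun z => ENNReal.ofReal (1 - pkill lam γ z)))

/-- The nonlinear chain of laws `η_{n+1} = η_n Q_{η_n}`. -/
def etaChain {d : ℕ} (b : Torus d → Fin d → ℝ) (lam : Torus d → ℝ) (γ : ℝ)
    (η0 : Measure (Torus d)) : ℕ → Measure (Torus d)
  | 0 => η0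
  | n + 1 => (etaChain b lam γ η0 n).bind (Qker b lam γ (etaChain b lam γ η0 n))

/-- The empirical measure `π(x) = N⁻¹ ∑ δ_{x_i}`. -/
def emp {d N : ℕ} (x : Fin N → Torus d) : Measure (Torus d) :=
  (N : ℝ≥0∞)⁻¹ • ∑ i, Measure.dirac (x i)

/-- The mean-field particle kernel `R_{N,γ}(x,·) = ⊗_i Q_{π(x)}(x_i,·)`. -/
def Rker {d : ℕ} (b : Torus d → Fin d → ℝ) (lam : Torus d → ℝ) (γ : ℝ) {N : ℕ}
    (x : Fin N → Torus d) : Measure (Fin N → Torus d) :=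
  Measure.pi fun i => Qker b lam γ (emp x) (x i)

/-- Iterated action of a kernel on a measure: `μ ↦ μ R^m`. -/
def iterK {E : Type*} [MeasurableSpace E] (R : E → Measure E) : ℕ → Measure E → Measure E
  | 0, μ => μ
  | m + 1, μ => (iterK R m μ).bind R

/-- The set of couplings of `μ` and `ν`. -/
def Coupling {E : Type*} [MeasurableSpace E] (μ ν : Measure E) : Set (Measure (E × E)) :=
  {P | IsProbabilityMeasure P ∧ P.map Prod.fst = μ ∧ P.map Prod.snd = ν}

/-- The Wasserstein distance associated to a cost `ρ`:
`W_ρ(μ,ν) = inf { E[ρ(X,Y)] : X ~ μ, Y ~ ν }`. -/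
def Wass {E : Type*} [MeasurableSpace E] (ρ : E → E → ℝ) (μ ν : Measure E) : ℝ :=
  sInf ((fun P : Measure (E × E) => ∫ z, ρ z.1 z.2 ∂P) '' Coupling μ ν)

/-- The distance `ρ(x,y) = (1 - e^{-a|x-y|})/a`. -/
def rho {d : ℕ} (a : ℝ) (x y : Torus d) : ℝ := (1 - Real.exp (-a * tdist x y)) / a

/-- The distance `ρ_N(x,y) = ∑_i ρ(x_i,y_i)` on `(𝕋^d)^N`. -/
def rhoN {d : ℕ} (a : ℝ) {N : ℕ} (x y : Fin N → Torus d) : ℝ := ∑ i, rho a (x i) (y i)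

/-- The rate `α(N)` of convergence of empirical measures. -/
def alphaRate (d N : ℕ) : ℝ :=
  if d = 1 then (N : ℝ) ^ (-(1/2 : ℝ))
  else if d = 2 then (N : ℝ) ^ (-(1/2 : ℝ)) * Real.log (1 + (N : ℝ))
  else (N : ℝ) ^ (-(1 / (d : ℝ)))

/-- The contraction property of the Euler kernel in `W_ρ` (Majka's estimate). -/
def EulerContract {d : ℕ} (b : Torus d → Fin d → ℝ) (a c₁ γ₀ : ℝ) : Prop :=
  ∀ γ ∈ Set.Ioc (0 : ℝ) γ₀, ∀ μ ν : Measure (Torus d),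
    IsProbabilityMeasure μ → IsProbabilityMeasure ν →
      Wass (rho a) (μ.bind (eulerK b γ)) (ν.bind (eulerK b γ)) ≤ (1 - c₁ * γ) * Wass (rho a) μ ν

/-- κ = c₁ - c₂ L_λ e^{γ ‖λ‖_∞}. -/
def kap {d : ℕ} (lam : Torus d → ℝ) (c₁ c₂ L γ : ℝ) : ℝ :=
  c₁ - c₂ * L * Real.exp (γ * ⨆ z, lam z)

/-- The uniform contraction of the particle system `R_{N,γ}` in `W_{ρ_N}`. -/
def RContract {d : ℕ} (b : Torus d → Fin d → ℝ) (lam : Torus d → ℝ)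
    (a c₁ c₂ L γ₀ : ℝ) : Prop :=
  ∀ γ ∈ Set.Ioc (0 : ℝ) γ₀, ∀ N : ℕ, ∀ μ ν : Measure (Fin N → Torus d),
    IsProbabilityMeasure μ → IsProbabilityMeasure ν →
      Wass (rhoN a) (μ.bind (Rker b lam γ)) (ν.bind (Rker b lam γ))
        ≤ (1 - γ * kap lam c₁ c₂ L γ) * Wass (rhoN a) μ ν


/-! Averaging `Q_μ(x,·)` over `x ~ μ` turns its first term into the survival-weighted measure
`μK[·(1−p)]` and its rebirth term into `P ∑ₖ Pᵏ · μK[·(1−p)]`, where `P = μK p`. Since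
`1 + P (1 − P)⁻¹ = (1 − P)⁻¹` in `ℝ≥0∞` (even when `P = 1`) and `1 − P = μK[1 − p]`,
the measure `μ Q_μ` is `μK[·(1−p)]` normalised by its total mass. -/

theorem ENNReal.one_add_mul_inv_one_sub (a : ℝ≥0∞) : 1 + a * (1 - a)⁻¹ = (1 - a)⁻¹ := by
  rcases lt_or_ge a 1 with ha | ha
  · have h0 : (1 : ℝ≥0∞) - a ≠ 0 := (tsub_pos_of_lt ha).ne'
    have htop : (1 : ℝ≥0∞) - a ≠ ⊤ := (tsub_le_self.trans_lt ENNReal.one_lt_top).ne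
    calc 1 + a * (1 - a)⁻¹ = ((1 - a) + a) * (1 - a)⁻¹ := by
          rw [add_mul, ENNReal.mul_inv_cancel h0 htop]
      _ = (1 - a)⁻¹ := by rw [tsub_add_cancel_of_le ha.le, one_mul]
  · simp [tsub_eq_zero_of_le ha, (zero_lt_one.trans_le ha).ne']

namespace MeasureTheory.Measure

variable {α β γ : Type*} [MeasurableSpace α] [MeasurableSpace β] [MeasurableSpace γ]

theorem measurable_map_of_measurable_uncurry {ν : Measure γ} [SFinite ν] {H : α → γ → β}
    (hH : Measurable (Function.uncurry H)) : Measurable fun x => ν.map (H x) := by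
  refine measurable_of_measurable_coe _ fun s hs => ?_
  simp_rw [map_apply hH.of_uncurry_left hs]
  exact measurable_measure_prodMk_left (hH hs)

variable {κ : α → Measure β} {g : β → ℝ≥0∞} {c : α → ℝ≥0∞}

theorem measurable_withDensity_add_smul (hκ : Measurable κ) (hg : Measurable g)
    (hc : Measurable c) (ν : Measure β) :
    Measurable fun x => (κ x).withDensity g + c x • ν := by
  refine measurable_of_measurable_coe _ fun s hs => ?_
  simp_rw [add_apply, smul_apply, withDensity_apply _ hs, smul_eq_mul, ← lintegral_indicator hs]
  exact ((measurable_lintegral (hg.indicator hs)).comp hκ).add (hc.mul_const _)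

theorem bind_withDensity_add_smul (μ : Measure α) (hκ : Measurable κ) (hg : Measurable g)
    (hc : Measurable c) (ν : Measure β) :
    μ.bind (fun x => (κ x).withDensity g + c x • ν)
      = (μ.bind κ).withDensity g + (∫⁻ x, c x ∂μ) • ν := by
  ext s hs
  rw [bind_apply hs (measurable_withDensity_add_smul hκ hg hc ν).aemeasurable]
  simp_rw [add_apply, smul_apply, withDensity_apply _ hs, smul_eq_mul, ← lintegral_indicator hs]
  have hκg : Measurable fun x => ∫⁻ z, s.indicator g z ∂κ x :=
    (measurable_lintegral (hg.indicator hs)).comp hκ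
  rw [lintegral_add_left hκg,
    lintegral_mul_const _ hc, lintegral_bind hκ.aemeasurable (hg.indicator hs).aemeasurable]

end MeasureTheory.Measure

section WithDensity

variable {β : Type*} [MeasurableSpace β] {ν : Measure β}

theorem integral_withDensity_ofReal {w : β → ℝ} (hw : Measurable w) (hw0 : ∀ z, 0 ≤ w z)
    (f : β → ℝ) :
    ∫ z, f z ∂ν.withDensity (fun z => ENNReal.ofReal (w z)) = ∫ z, f z * w z ∂ν := by
  rw [integral_withDensity_eq_integral_toReal_smul hw.ennreal_ofReal
    (Eventually.of_forall fun _ => ENNReal.ofReal_lt_top)]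
  simp_rw [ENNReal.toReal_ofReal (hw0 _), smul_eq_mul, mul_comm]

theorem integral_one_sub_eq_toReal_one_sub_lintegral [IsProbabilityMeasure ν] {p : β → ℝ}
    (hp : Measurable p) (hp0 : ∀ z, 0 ≤ p z) (hp1 : ∀ z, p z ≤ 1) :
    ∫ z, (1 - p z) ∂ν = (1 - ∫⁻ z, ENNReal.ofReal (p z) ∂ν).toReal := by
  have hP : ∫⁻ z, ENNReal.ofReal (p z) ∂ν ≠ ⊤ :=
    ne_top_of_le_ne_top (measure_ne_top ν Set.univ)
      ((lintegral_mono fun z => ENNReal.ofReal_le_one.mpr (hp1 z)).trans_eq (by simp))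
  rw [integral_eq_lintegral_of_nonneg_ae (Eventually.of_forall fun z => sub_nonneg.mpr (hp1 z))
    (measurable_const.sub hp).aestronglyMeasurable]
  simp_rw [ENNReal.ofReal_sub _ (hp0 _), ENNReal.ofReal_one]
  rw [lintegral_sub hp.ennreal_ofReal hP
    (Eventually.of_forall fun z => ENNReal.ofReal_le_one.mpr (hp1 z)), lintegral_one, measure_univ]

end WithDensity

theorem Torus.isOpenQuotientMap_proj {d : ℕ} : IsOpenQuotientMap (Torus.proj (d := d)) :=
  IsOpenQuotientMap.piMap fun _ => QuotientAddGroup.isOpenQuotientMap_mk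

theorem IsC1Drift.continuous {d : ℕ} {b : Torus d → Fin d → ℝ} (hb : IsC1Drift b) :
    Continuous b :=
  Torus.isOpenQuotientMap_proj.continuous_comp_iff.mp (ContDiff.continuous hb)

instance isProbabilityMeasure_stdGaussian (d : ℕ) :
    IsProbabilityMeasure (_root_.stdGaussian d) := by
  unfold _root_.stdGaussian; infer_instance

section Euler

variable {d : ℕ} {b : Torus d → Fin d → ℝ}

theorem measurable_eulerStep (hb : Measurable b) (γ : ℝ) :
    Measurable fun q : Torus d × (Fin d → ℝ) =>
      q.1 + Torus.proj (fun i => γ * b q.1 i + Real.sqrt γ * q.2 i) := by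
  have := Torus.isOpenQuotientMap_proj (d := d) |>.continuous.measurable
  fun_prop

theorem measurable_eulerK (hb : Measurable b) (γ : ℝ) : Measurable (eulerK b γ) :=
  Measure.measurable_map_of_measurable_uncurry (measurable_eulerStep hb γ)

theorem isProbabilityMeasure_eulerK (hb : Measurable b) (γ : ℝ) (x : Torus d) :
    IsProbabilityMeasure (eulerK b γ x) :=
  Measure.isProbabilityMeasure_map
    ((measurable_eulerStep hb γ).comp measurable_prodMk_left).aemeasurable

end Euler

section Killing

variable {d : ℕ} {lam : Torus d → ℝ} {γ : ℝ}

theorem pkill_le_one (z : Torus d) : pkill lam γ z ≤ 1 :=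
  sub_le_self _ (exp_pos _).le

theorem pkill_nonneg (hγ : 0 ≤ γ) {z : Torus d} (hz : 0 ≤ lam z) : 0 ≤ pkill lam γ z :=
  sub_nonneg.mpr (exp_le_one_iff.mpr (neg_nonpos.mpr (mul_nonneg hγ hz)))

theorem measurable_pkill (hlam : Measurable lam) : Measurable (pkill lam γ) := by
  unfold pkill; fun_prop

theorem bind_Qker {b : Torus d → Fin d → ℝ} (hb : Measurable b) (hlam : Measurable lam)
    (μ : Measure (Torus d)) :
    μ.bind (Qker b lam γ μ)
      = (1 - ∫⁻ z, ENNReal.ofReal (pkill lam γ z) ∂(μ.bind (eulerK b γ)))⁻¹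
        • (μ.bind (eulerK b γ)).withDensity (fun z => ENNReal.ofReal (1 - pkill lam γ z)) := by
  have hK := measurable_eulerK hb γ
  have hp : Measurable fun z => ENNReal.ofReal (pkill lam γ z) :=
    (measurable_pkill hlam).ennreal_ofReal
  have hs : Measurable fun z => ENNReal.ofReal (1 - pkill lam γ z) :=
    (measurable_const.sub (measurable_pkill hlam)).ennreal_ofReal
  have hKp : Measurable fun x => ∫⁻ z, ENNReal.ofReal (pkill lam γ z) ∂eulerK b γ x :=
    (Measure.measurable_lintegral hp).comp hK
  unfold Qker
  rw [Measure.bind_withDensity_add_smul μ hK hs (hKp.mul_const _), lintegral_mul_const _ hKp,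
    ← Measure.lintegral_bind hK.aemeasurable hp.aemeasurable, ENNReal.tsum_geometric]
  conv_rhs => rw [← ENNReal.one_add_mul_inv_one_sub, add_smul, one_smul]

end Killing

theorem muQmu_eq_conditioned_step_general
    {d : ℕ} (b : Torus d → Fin d → ℝ) (hb : IsC1Drift b)
    (lam : Torus d → ℝ) (hlamc : Continuous lam) (hlam0 : ∀ z, 0 ≤ lam z)
    (γ : ℝ) (hγ : 0 < γ)
    (μ : Measure (Torus d)) (hμ : IsProbabilityMeasure μ)
    (f : Torus d → ℝ) :
    ∫ z, f z ∂(μ.bind (Qker b lam γ μ))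
      = (∫ z, f z * (1 - pkill lam γ z) ∂(μ.bind (eulerK b γ)))
        / (∫ z, (1 - pkill lam γ z) ∂(μ.bind (eulerK b γ))) := by
  have hbm := hb.continuous.measurable
  have hp := measurable_pkill (γ := γ) hlamc.measurable
  have hp0 : ∀ z, 0 ≤ pkill lam γ z := fun z => pkill_nonneg hγ.le (hlam0 z)
  have : IsProbabilityMeasure (μ.bind (eulerK b γ)) :=
    isProbabilityMeasure_bind (measurable_eulerK hbm γ).aemeasurable
      (Eventually.of_forall (isProbabilityMeasure_eulerK hbm γ))
  rw [bind_Qker hbm hlamc.measurable, integral_smul_measure,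
    integral_withDensity_ofReal (w := fun z => 1 - pkill lam γ z) (measurable_const.sub hp)
      (fun z => sub_nonneg.mpr (pkill_le_one z)),
    integral_one_sub_eq_toReal_one_sub_lintegral hp hp0 pkill_le_one,
    ENNReal.toReal_inv, smul_eq_mul, inv_mul_eq_div]

/-- For every `μ` and every bounded measurable `f`, `μ Q_μ f = μK[f(1−p)] / μK[1−p]`:
the map `μ ↦ μ Q_μ` is the one-step evolution of the Euler chain conditioned on survival. -/
theorem muQmu_eq_conditioned_step
    {d : ℕ} (b : Torus d → Fin d → ℝ) (hb : IsC1Drift b)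
    (lam : Torus d → ℝ) (hlamc : Continuous lam) (hlam0 : ∀ z, 0 ≤ lam z)
    (γ : ℝ) (hγ : 0 < γ)
    (μ : Measure (Torus d)) (hμ : IsProbabilityMeasure μ)
    (f : Torus d → ℝ) (hf : Measurable f) (hfbd : ∃ M, ∀ z, |f z| ≤ M) :
    ∫ z, f z ∂(μ.bind (Qker b lam γ μ))
      = (∫ z, f z * (1 - pkill lam γ z) ∂(μ.bind (eulerK b γ)))
        / (∫ z, (1 - pkill lam γ z) ∂(μ.bind (eulerK b γ))) :=
  muQmu_eq_conditioned_step_general b hb lam hlamc hlam0 γ hγ μ hμ f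

end
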